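/- Let d ≥ 4, a ≥ 2, σ ≥ a be integers, and let n₀ ≥ n₁ ≥ ... ≥ n_{σ-1} ≥ σ be a nonincreasing sequence of integers with n₀ ≥ d - 1. Suppose the sequence has no gaps in the range below d-1, meaning: for every index r with 1 ≤ r ≤ σ-1 and n_r ≤ d - 2, one has n_{r-1} ≤ n_r + 1. Suppose further that n_{a-1} < d - 2 and n_{a-1} ≥ d - a. Then Σ_{i=0}^{σ-1} (n_i - i) ≥ a(d-a). -/

import Mathlib

/-!
Without a gap below `d - 1`, the sequence can drop by at most one per step once it is at most
`d - 2`; starting from `n₀ ≥ d - 1` it therefore stays above the staircase `n_i ≥ d - 1 - i`.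
Summing `n_i - i ≥ d - 1 - 2i` over `i < a` gives exactly `a (d - a)`, and the remaining terms
`n_i - i` with `a ≤ i < σ` are nonnegative because `n_i ≥ n_{σ-1} ≥ σ > i`.
-/

lemma staircase_le_of_no_gap (d : ℤ) (σ : ℕ) (n : ℕ → ℤ) (h0 : d - 1 ≤ n 0)
    (hnogap : ∀ r : ℕ, 1 ≤ r → r ≤ σ - 1 → n r ≤ d - 2 → n (r - 1) ≤ n r + 1) :
    ∀ i < σ, d - 1 - i ≤ n i := by
  intro i hi
  induction i with
  | zero => simpa using h0
  | succ i ih =>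
    have hprev := ih (by omega)
    by_cases hlow : n (i + 1) ≤ d - 2
    · have hstep := hnogap (i + 1) (by omega) (by omega) hlow
      rw [Nat.add_sub_cancel] at hstep
      push_cast
      linarith
    · push_cast
      linarith

lemma sum_range_sub_two_mul (d : ℤ) (a : ℕ) :
    ∑ i ∈ Finset.range a, (d - 1 - 2 * (i : ℤ)) = a * (d - a) := by
  induction a with
  | zero => simp
  | succ a ih =>
    rw [Finset.sum_range_succ, ih]
    push_cast
    ring

lemma sum_Ico_sub_nonneg (a σ : ℕ) (n : ℕ → ℤ) (hmono : ∀ i : ℕ, i + 1 < σ → n (i + 1) ≤ n i)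
    (hlast : (σ : ℤ) ≤ n (σ - 1)) :
    0 ≤ ∑ i ∈ Finset.Ico a σ, (n i - (i : ℤ)) := by
  have hanti : AntitoneOn n (Set.Iio σ) :=
    antitoneOn_of_add_one_le Set.ordConnected_Iio fun i _ _ hi1 => hmono i hi1
  refine Finset.sum_nonneg fun i hi => ?_
  rw [Finset.mem_Ico] at hi
  have hle : n (σ - 1) ≤ n i :=
    hanti (Set.mem_Iio.mpr hi.2) (Set.mem_Iio.mpr (by omega)) (by omega)
  have hiσ : (i : ℤ) < σ := by exact_mod_cast hi.2
  linarith

theorem stmt_14_general (d : ℤ) (a σ : ℕ) (n : ℕ → ℤ) (haσ : a ≤ σ)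
    (hmono : ∀ i : ℕ, i + 1 < σ → n (i + 1) ≤ n i)
    (hlast : (σ : ℤ) ≤ n (σ - 1))
    (h0 : d - 1 ≤ n 0)
    (hnogap : ∀ r : ℕ, 1 ≤ r → r ≤ σ - 1 → n r ≤ d - 2 → n (r - 1) ≤ n r + 1) :
    (a : ℤ) * (d - (a : ℤ)) ≤ ∑ i ∈ Finset.range σ, (n i - (i : ℤ)) := by
  have hstair := staircase_le_of_no_gap d σ n h0 hnogap
  have hhead : (a : ℤ) * (d - a) ≤ ∑ i ∈ Finset.range a, (n i - (i : ℤ)) := by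
    rw [← sum_range_sub_two_mul]
    refine Finset.sum_le_sum fun i hi => ?_
    have := hstair i (by rw [Finset.mem_range] at hi; omega)
    linarith
  have htail := sum_Ico_sub_nonneg a σ n hmono hlast
  rw [← Finset.sum_range_add_sum_Ico _ haσ]
  linarith

theorem stmt_14 (d : ℤ) (a σ : ℕ) (n : ℕ → ℤ) (hd : 4 ≤ d) (ha : 2 ≤ a) (haσ : a ≤ σ)
    (hmono : ∀ i : ℕ, i + 1 < σ → n (i + 1) ≤ n i)
    (hlast : (σ : ℤ) ≤ n (σ - 1))
    (h0 : d - 1 ≤ n 0)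
    (hnogap : ∀ r : ℕ, 1 ≤ r → r ≤ σ - 1 → n r ≤ d - 2 → n (r - 1) ≤ n r + 1)
    (hna1 : n (a - 1) < d - 2)
    (hna2 : d - (a : ℤ) ≤ n (a - 1)) :
    (a : ℤ) * (d - (a : ℤ)) ≤ ∑ i ∈ Finset.range σ, (n i - (i : ℤ)) :=
  stmt_14_general d a σ n haσ hmono hlast h0 hnogap
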